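/- The flip graph Fₙ on trivalent trees with n labeled leaves is connected for all n ≥ 4: any trivalent tree with n labeled leaves can be transformed into any other by a finite sequence of elementary flips. -/

import Mathlib

/-- A trivalent (binary) tree with `n` labeled leaves, encoded by its set of
splits: each internal edge determines a bipartition of the leaf set, and we
record the side not containing leaf `0`.  A maximal pairwise-compatible family
of `n - 3` nontrivial splits corresponds exactly to a trivalent leaf-labeled
tree. -/
structure TrivTree (n : ℕ) where
  splits : Finset (Finset (Fin n))
  zero_not_mem : ∀ A ∈ splits, ∀ a ∈ A, (a : ℕ) ≠ 0
  two_le_card : ∀ A ∈ splits, 2 ≤ A.card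
  card_le : ∀ A ∈ splits, A.card ≤ n - 2
  compat : ∀ A ∈ splits, ∀ B ∈ splits, A ⊆ B ∨ B ⊆ A ∨ Disjoint A B
  card_splits : splits.card = n - 3

/-- The flip graph `Fₙ`: two trivalent trees are adjacent iff they are related
by an elementary flip (NNI move), i.e. iff they are distinct and share all
but one split (the flipped internal edge). -/
def flipGraph (n : ℕ) : SimpleGraph (TrivTree n) where
  Adj t t' := t ≠ t' ∧ (t.splits ∩ t'.splits).card = n - 4
  symm := ⟨fun t t' h => ⟨Ne.symm h.1, by rw [Finset.inter_comm]; exact h.2⟩⟩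
  loopless := ⟨fun t h => h.1 rfl⟩

/-- `t` and `t'` differ by a single elementary flip. -/
def Flip {n : ℕ} (t t' : TrivTree n) : Prop := (flipGraph n).Adj t t'

/-!
Every tree can be flipped to the caterpillar whose splits are `{1, …, j}` for `2 ≤ j ≤ n - 2`.
Going down in `k`, we create `{1, …, k}` while keeping the splits `{1, …, j}` with `j > k`.
Let `R = {1, …, k + 1}` and `x = k + 1`; `R` is compatible with every split. The splits that
contain `x` and lie strictly inside `R` form a chain. If it is nonempty, replacing its smallest
member `A` by `P \ {x}`, where `P` is the next split above `A` (or `R`), is a flip that shortens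
the chain. Once the chain is empty, `R \ {x} = {1, …, k}` is compatible with every split, and
exchanging it for a split that is not one of the `{1, …, j}` is a flip; one exists by counting.
-/

namespace Finset

variable {α : Type*}

def Compatible (A B : Finset α) : Prop := A ⊆ B ∨ B ⊆ A ∨ Disjoint A B

theorem Compatible.refl (A : Finset α) : A.Compatible A := Or.inl Subset.rfl

theorem Compatible.symm {A B : Finset α} (h : A.Compatible B) : B.Compatible A := by
  rcases h with h | h | h
  exacts [Or.inr (Or.inl h), Or.inl h, Or.inr (Or.inr h.symm)]

theorem Compatible.erase [DecidableEq α] {C P : Finset α} {x : α} (h : C.Compatible P)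
    (hx : x ∈ C → C ⊆ P → C = P) : C.Compatible (P.erase x) := by
  rcases h with h | h | h
  · by_cases hxC : x ∈ C
    · exact Or.inr (Or.inl (hx hxC h ▸ erase_subset x C))
    · exact Or.inl (subset_erase.mpr ⟨h, hxC⟩)
  · exact Or.inr (Or.inl ((erase_subset x P).trans h))
  · exact Or.inr (Or.inr (h.mono_right (erase_subset x P)))

theorem not_compatible_erase [DecidableEq α] {A P : Finset α} {x : α} (hxA : x ∈ A)
    (hAP : A ⊂ P) (hA : 2 ≤ A.card) : ¬ A.Compatible (P.erase x) := by
  rintro (h | h | h)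
  · exact (mem_erase.mp (h hxA)).1 rfl
  · have hPA : P ⊆ A := by
      rw [← insert_erase (hAP.subset hxA)]
      exact insert_subset hxA h
    exact hAP.not_subset hPA
  · obtain ⟨a, ha⟩ : (A.erase x).Nonempty := by
      rw [← card_pos, card_erase_of_mem hxA]; omega
    exact disjoint_left.mp h (mem_of_mem_erase ha)
      (erase_subset_erase x hAP.subset ha)

end Finset

open Finset

namespace TrivTree

variable {n : ℕ}

theorem splits_injective : Function.Injective (splits : TrivTree n → Finset (Finset (Fin n))) := by
  rintro ⟨⟩ ⟨⟩ h
  cases h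
  rfl

theorem compatible (t : TrivTree n) {A B : Finset (Fin n)} (hA : A ∈ t.splits)
    (hB : B ∈ t.splits) : A.Compatible B :=
  t.compat A hA B hB

theorem exists_adj_of_exchange (t : TrivTree n) {A B : Finset (Fin n)} (hA : A ∈ t.splits)
    (hB : B ∉ t.splits) (hB0 : ∀ a ∈ B, (a : ℕ) ≠ 0) (hB2 : 2 ≤ B.card)
    (hBn : B.card ≤ n - 2) (hcompat : ∀ C ∈ t.splits, C ≠ A → C.Compatible B) :
    ∃ t' : TrivTree n, (flipGraph n).Adj t t' ∧ t'.splits = insert B (t.splits.erase A) := by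
  have hcompat' : ∀ C ∈ t.splits.erase A, C.Compatible B := fun C hC =>
    hcompat C (mem_of_mem_erase hC) (ne_of_mem_erase hC)
  have hn : 4 ≤ n := by
    have := card_pos.mpr ⟨A, hA⟩
    rw [t.card_splits] at this
    omega
  have hcard : (t.splits.erase A).card = n - 4 := by
    rw [card_erase_of_mem hA, t.card_splits]
    omega
  refine ⟨⟨insert B (t.splits.erase A), ?_, ?_, ?_, ?_, ?_⟩, ⟨?_, ?_⟩, rfl⟩
  · simp only [mem_insert]
    rintro C (rfl | hC)
    exacts [hB0, t.zero_not_mem C (mem_of_mem_erase hC)]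
  · simp only [mem_insert]
    rintro C (rfl | hC)
    exacts [hB2, t.two_le_card C (mem_of_mem_erase hC)]
  · simp only [mem_insert]
    rintro C (rfl | hC)
    exacts [hBn, t.card_le C (mem_of_mem_erase hC)]
  · simp only [mem_insert]
    rintro C (rfl | hC) D (rfl | hD)
    exacts [Compatible.refl _, (hcompat' D hD).symm, hcompat' C hC,
      t.compatible (mem_of_mem_erase hC) (mem_of_mem_erase hD)]
  · have hBe : B ∉ t.splits.erase A := fun h => hB (mem_of_mem_erase h)
    rw [card_insert_of_notMem hBe, hcard]
    omega
  · intro h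
    exact hB (congrArg splits h ▸ mem_insert_self B _)
  · rw [inter_insert_of_notMem hB, inter_eq_right.mpr (erase_subset A _), hcard]

theorem exists_minimal_split_above (t : TrivTree n) {A R : Finset (Fin n)} (hAR : A ⊂ R)
    (hR : ∀ C ∈ t.splits, C.Compatible R) :
    ∃ P, A ⊂ P ∧ P ⊆ R ∧ (∀ C ∈ t.splits, C.Compatible P) ∧
      ∀ C ∈ t.splits, A ⊂ C → C ⊆ P → C = P := by
  obtain ⟨P, hPU, hPmin⟩ := exists_min_image (insert R (t.splits.filter fun C => A ⊂ C ∧ C ⊆ R))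
    card (insert_nonempty _ _)
  have hP : A ⊂ P ∧ P ⊆ R ∧ ∀ C ∈ t.splits, C.Compatible P := by
    rcases mem_insert.mp hPU with rfl | hPs
    · exact ⟨hAR, Subset.rfl, hR⟩
    · obtain ⟨hPs, hAP, hPR⟩ := mem_filter.mp hPs
      exact ⟨hAP, hPR, fun C hC => t.compatible hC hPs⟩
  refine ⟨P, hP.1, hP.2.1, hP.2.2, fun C hC hAC hCP => ?_⟩
  have hCU : C ∈ insert R (t.splits.filter fun C => A ⊂ C ∧ C ⊆ R) :=
    mem_insert_of_mem (mem_filter.mpr ⟨hC, hAC, hCP.trans hP.2.1⟩)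
  exact eq_of_subset_of_card_le hCP (hPmin C hCU)

def chainBelow (t : TrivTree n) (R : Finset (Fin n)) (x : Fin n) : Finset (Finset (Fin n)) :=
  t.splits.filter fun C => x ∈ C ∧ C ⊂ R

theorem exists_adj_card_chainBelow_lt (t : TrivTree n) {R : Finset (Fin n)} {x : Fin n}
    (hR : ∀ C ∈ t.splits, C.Compatible R) (hR0 : ∀ a ∈ R, (a : ℕ) ≠ 0)
    (hRn : R.card ≤ n - 1) (hD : (t.chainBelow R x).Nonempty) :
    ∃ t', (flipGraph n).Adj t t' ∧ (∃ A ⊂ R, t.splits.erase A ⊆ t'.splits) ∧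
      (t'.chainBelow R x).card < (t.chainBelow R x).card := by
  obtain ⟨A, hAD, hAmin⟩ := exists_min_image _ card hD
  obtain ⟨hAs, hxA, hAR⟩ := mem_filter.mp hAD
  obtain ⟨P, hAP, hPR, hPcompat, hPmin⟩ := t.exists_minimal_split_above hAR hR
  have hA2 := t.two_le_card A hAs
  have hchain : ∀ C ∈ t.splits, x ∈ C → C ⊆ P → C ≠ A → C = P := by
    intro C hC hxC hCP hCA
    rcases t.compatible hC hAs with hCA' | hAC | hdisj
    · have hCD : C ∈ t.chainBelow R x :=
        mem_filter.mpr ⟨hC, hxC, lt_of_le_of_lt hCA' hAR⟩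
      exact absurd (eq_of_subset_of_card_le hCA' (hAmin C hCD)) hCA
    · exact hPmin C hC (lt_of_le_of_ne hAC (Ne.symm hCA)) hCP
    · exact absurd hxA (disjoint_left.mp hdisj hxC)
  have hxP : x ∈ P := hAP.subset hxA
  have hBs : P.erase x ∉ t.splits := fun hB =>
    not_compatible_erase hxA hAP hA2 (t.compatible hAs hB)
  have hBcard : (P.erase x).card = P.card - 1 := card_erase_of_mem hxP
  have hAP' := card_lt_card hAP
  have hPn := card_le_card hPR
  obtain ⟨t', hadj, hsp⟩ := t.exists_adj_of_exchange hAs hBs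
    (fun a ha => hR0 a (hPR (mem_of_mem_erase ha))) (by omega) (by omega)
    (fun C hC hCA => (hPcompat C hC).erase fun hxC hCP => hchain C hC hxC hCP hCA)
  refine ⟨t', hadj, ⟨A, hAR, hsp ▸ subset_insert _ _⟩, ?_⟩
  refine lt_of_le_of_lt (card_le_card fun C hC => ?_) (card_erase_lt_of_mem hAD)
  obtain ⟨hCs, hxC, hCR⟩ := mem_filter.mp hC
  rw [hsp, mem_insert] at hCs
  rcases hCs with rfl | hCs
  · exact absurd rfl (mem_erase.mp hxC).1
  · exact mem_erase.mpr ⟨ne_of_mem_erase hCs, mem_filter.mpr ⟨mem_of_mem_erase hCs, hxC, hCR⟩⟩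

/-- For `2 ≤ j ≤ n - 2` these are the splits of the caterpillar with leaves `0, 1, …, n - 1`
in order. -/
def caterpillarSplit (n j : ℕ) : Finset (Fin n) :=
  univ.filter fun a => 0 < (a : ℕ) ∧ (a : ℕ) ≤ j

theorem mem_caterpillarSplit {j : ℕ} {a : Fin n} :
    a ∈ caterpillarSplit n j ↔ 0 < (a : ℕ) ∧ (a : ℕ) ≤ j := by
  simp [caterpillarSplit]

theorem caterpillarSplit_mono {j j' : ℕ} (h : j ≤ j') :
    caterpillarSplit n j ⊆ caterpillarSplit n j' := fun _ ha =>
  mem_caterpillarSplit.mpr ((mem_caterpillarSplit.mp ha).imp_right (·.trans h))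

theorem card_caterpillarSplit {j : ℕ} (hj : j < n) : (caterpillarSplit n j).card = j := by
  have himage : (caterpillarSplit n j).image Fin.val = Ioc 0 j := by
    ext v
    simp only [mem_image, mem_caterpillarSplit, mem_Ioc]
    constructor
    · rintro ⟨a, ha, rfl⟩
      exact ha
    · intro hv
      exact ⟨⟨v, by omega⟩, hv, rfl⟩
  rw [← card_image_of_injective _ Fin.val_injective, himage, Nat.card_Ioc, Nat.sub_zero]

theorem caterpillarSplit_succ_erase {k : ℕ} (hk : k + 1 < n) :
    (caterpillarSplit n (k + 1)).erase ⟨k + 1, hk⟩ = caterpillarSplit n k := by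
  ext a
  simp only [mem_erase, mem_caterpillarSplit, ne_eq, Fin.ext_iff]
  omega

def HasCaterpillarSplitsFrom (k : ℕ) (t : TrivTree n) : Prop :=
  ∀ j, k ≤ j → j ≤ n - 2 → caterpillarSplit n j ∈ t.splits

theorem compatible_caterpillarSplit {k : ℕ} {t : TrivTree n}
    (ht : t.HasCaterpillarSplitsFrom k) (C : Finset (Fin n)) (hC : C ∈ t.splits) :
    C.Compatible (caterpillarSplit n k) := by
  by_cases hk : k ≤ n - 2
  · exact t.compatible hC (ht k le_rfl hk)
  · refine Or.inl fun a ha => mem_caterpillarSplit.mpr ?_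
    have := t.zero_not_mem C hC a ha
    omega

theorem HasCaterpillarSplitsFrom.of_erase_subset {k : ℕ} {t t' : TrivTree n}
    (ht : t.HasCaterpillarSplitsFrom k) {A : Finset (Fin n)} (hA : A ⊂ caterpillarSplit n k)
    (htt' : t.splits.erase A ⊆ t'.splits) : t'.HasCaterpillarSplitsFrom k := by
  refine fun j hkj hjn => htt' (mem_erase.mpr ⟨?_, ht j hkj hjn⟩)
  rintro rfl
  exact hA.not_subset (caterpillarSplit_mono hkj)

theorem splits_eq_of_hasCaterpillarSplitsFrom_two {t : TrivTree n}
    (ht : t.HasCaterpillarSplitsFrom 2) :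
    t.splits = (Icc 2 (n - 2)).image (caterpillarSplit n) := by
  have hsub : (Icc 2 (n - 2)).image (caterpillarSplit n) ⊆ t.splits :=
    image_subset_iff.mpr fun j hj => ht j (mem_Icc.mp hj).1 (mem_Icc.mp hj).2
  refine (eq_of_subset_of_card_le hsub ?_).symm
  have hinj : Set.InjOn (caterpillarSplit n) (Icc 2 (n - 2)) := by
    intro i hi j hj hij
    simp only [coe_Icc, Set.mem_Icc] at hi hj
    simpa [card_caterpillarSplit (by omega : i < n), card_caterpillarSplit (by omega : j < n)]
      using congrArg card hij
  rw [card_image_of_injOn hinj, Nat.card_Icc, t.card_splits]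
  omega

theorem exists_adj_of_chainBelow_eq_empty {k : ℕ} (hk : 2 ≤ k) (hkn : k + 1 < n)
    {t : TrivTree n} (ht : t.HasCaterpillarSplitsFrom (k + 1))
    (hmiss : caterpillarSplit n k ∉ t.splits)
    (hD : t.chainBelow (caterpillarSplit n (k + 1)) ⟨k + 1, hkn⟩ = ∅) :
    ∃ t', (flipGraph n).Adj t t' ∧ t'.HasCaterpillarSplitsFrom k := by
  have hcount : ¬ t.splits ⊆ (Icc (k + 1) (n - 2)).image (caterpillarSplit n) := fun hsub => by
    have := (card_le_card hsub).trans card_image_le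
    rw [t.card_splits, Nat.card_Icc] at this
    omega
  obtain ⟨E, hE, hEcat⟩ := not_subset.mp hcount
  have hcompat : ∀ C ∈ t.splits, C.Compatible (caterpillarSplit n k) := fun C hC => by
    rw [← caterpillarSplit_succ_erase hkn]
    refine (compatible_caterpillarSplit ht C hC).erase fun hxC hCR => by_contra fun hne => ?_
    have hCD : C ∈ t.chainBelow _ _ := mem_filter.mpr ⟨hC, hxC, lt_of_le_of_ne hCR hne⟩
    simp [hD] at hCD
  have hcard := card_caterpillarSplit (by omega : k < n)
  obtain ⟨t', hadj, hsp⟩ := t.exists_adj_of_exchange hE hmiss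
    (fun a ha => (mem_caterpillarSplit.mp ha).1.ne') (by omega) (by omega)
    (fun C hC _ => hcompat C hC)
  refine ⟨t', hadj, fun j hkj hjn => ?_⟩
  rw [hsp]
  rcases hkj.eq_or_lt with rfl | hkj
  · exact mem_insert_self _ _
  · refine mem_insert_of_mem (mem_erase.mpr ⟨fun hEj => hEcat ?_, ht j hkj hjn⟩)
    exact hEj ▸ mem_image_of_mem _ (mem_Icc.mpr ⟨hkj, hjn⟩)

theorem exists_reachable_hasCaterpillarSplitsFrom_pred {k : ℕ} (hk : 2 ≤ k) (hkn : k + 1 < n)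
    (t : TrivTree n) (ht : t.HasCaterpillarSplitsFrom (k + 1)) :
    ∃ t', t'.HasCaterpillarSplitsFrom k ∧ (flipGraph n).Reachable t t' := by
  induction hd : (t.chainBelow (caterpillarSplit n (k + 1)) ⟨k + 1, hkn⟩).card
    using Nat.strong_induction_on generalizing t with
  | _ d ih =>
  by_cases hmem : caterpillarSplit n k ∈ t.splits
  · exact ⟨t, fun j hkj hjn => hkj.eq_or_lt.elim (· ▸ hmem) (ht j · hjn), .rfl⟩
  rcases (t.chainBelow _ _).eq_empty_or_nonempty with hD | hD
  · obtain ⟨t', hadj, ht'⟩ := exists_adj_of_chainBelow_eq_empty hk hkn ht hmem hD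
    exact ⟨t', ht', hadj.reachable⟩
  · have hR0 : ∀ a ∈ caterpillarSplit n (k + 1), (a : ℕ) ≠ 0 := fun a ha =>
      (mem_caterpillarSplit.mp ha).1.ne'
    obtain ⟨t₁, hadj, ⟨A, hAR, hA⟩, hlt⟩ := t.exists_adj_card_chainBelow_lt
      (compatible_caterpillarSplit ht) hR0 (by rw [card_caterpillarSplit hkn]; omega) hD
    obtain ⟨t₂, ht₂, hr⟩ := ih _ (hd ▸ hlt) t₁ (ht.of_erase_subset hAR hA) rfl
    exact ⟨t₂, ht₂, hadj.reachable.trans hr⟩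

theorem exists_reachable_hasCaterpillarSplitsFrom_two (t : TrivTree n) :
    ∃ t', t'.HasCaterpillarSplitsFrom 2 ∧ (flipGraph n).Reachable t t' := by
  suffices h : ∀ k, 2 ≤ k → ∀ t : TrivTree n, t.HasCaterpillarSplitsFrom k →
      ∃ t', t'.HasCaterpillarSplitsFrom 2 ∧ (flipGraph n).Reachable t t' from
    h (n + 2) (by omega) t fun j hj hjn => by omega
  intro k hk
  induction k, hk using Nat.le_induction with
  | base => exact fun t ht => ⟨t, ht, .rfl⟩
  | succ k hk ih =>
    intro t ht
    by_cases hkn : k + 1 < n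
    · obtain ⟨t₁, ht₁, hr₁⟩ := exists_reachable_hasCaterpillarSplitsFrom_pred hk hkn t ht
      obtain ⟨t₂, ht₂, hr₂⟩ := ih t₁ ht₁
      exact ⟨t₂, ht₂, hr₁.trans hr₂⟩
    · exact ih t fun j hkj hjn => by omega

end TrivTree

/-- The flip graph `Fₙ` on trivalent trees with `n` labeled leaves is connected
for all `n ≥ 4`: any trivalent tree with `n` labeled leaves can be transformed
into any other by a finite sequence of elementary flips. -/
theorem flipGraph_connected :
    ∀ n : ℕ, 4 ≤ n → ∀ t t' : TrivTree n, (flipGraph n).Reachable t t' := by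
  intro n _ t t'
  obtain ⟨c, hc, hr⟩ := t.exists_reachable_hasCaterpillarSplitsFrom_two
  obtain ⟨c', hc', hr'⟩ := t'.exists_reachable_hasCaterpillarSplitsFrom_two
  have hcc : c = c' := TrivTree.splits_injective <| by
    rw [TrivTree.splits_eq_of_hasCaterpillarSplitsFrom_two hc,
      TrivTree.splits_eq_of_hasCaterpillarSplitsFrom_two hc']
  exact hr.trans (hcc ▸ hr'.symm)
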